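/- Let T be a finite nonabelian simple group, k ≥ 2 an integer, D = {(t,…,t) : t ∈ T} the full diagonal subgroup of T^k, V the set of right cosets of D in T^k, and M ≤ Sym(V) the image of the right multiplication action of T^k on V. Let G be a group with M ≤ G ≤ N_{Sym(V)}(M), the normalizer of M in Sym(V) (this normalizer is the group written T^k.(Out(T) × S_k)), and let Γ be a connected (G,2)-arc-transitive digraph with vertex set V, where G is a group of automorphisms of Γ. If w = D(t_1,…,t_k) is an out-neighbour in Γ of the vertex v = D, where the representative is chosen with t_k = 1, then ⟨t_1,…,t_k⟩ = T. -/

import Mathlib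

open scoped Pointwise

/-- An `s`-arc of the digraph `(V, r)`. -/
def IsSArc {V : Type*} (r : V → V → Prop) (s : ℕ) (v : ℕ → V) : Prop :=
  ∀ i < s, r (v i) (v (i + 1))

/-- The digraph `(V, r)` is `(G, s)`-arc-transitive. -/
def ArcTrans {V : Type*} (r : V → V → Prop) (G : Subgroup (Equiv.Perm V)) (s : ℕ) : Prop :=
  ∀ v w : ℕ → V, IsSArc r s v → IsSArc r s w → ∃ g ∈ G, ∀ i ≤ s, g (v i) = w i

/-- The full diagonal subgroup `{(t,…,t) : t ∈ T}` of the direct power `ι → T`. -/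
def diagSubgroup (ι : Type*) (T : Type*) [Group T] : Subgroup (ι → T) where
  carrier := {f | ∃ t : T, f = fun _ => t}
  one_mem' := ⟨1, rfl⟩
  mul_mem' := by rintro a b ⟨s, rfl⟩ ⟨t, rfl⟩; exact ⟨s * t, rfl⟩
  inv_mem' := by rintro a ⟨t, rfl⟩; exact ⟨t⁻¹, rfl⟩

/-- Right multiplication by `a ∈ G` as a permutation of the right cosets of `H`. -/
def rmulPerm {G : Type*} [Group G] (H : Subgroup G) (a : G) :
    Equiv.Perm (Quotient (QuotientGroup.rightRel H)) where
  toFun := Quotient.map' (fun x => x * a) (by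
    intro x y h
    rw [QuotientGroup.rightRel_apply] at h ⊢
    have e : y * a * (x * a)⁻¹ = y * x⁻¹ := by group
    rw [e]; exact h)
  invFun := Quotient.map' (fun x => x * a⁻¹) (by
    intro x y h
    rw [QuotientGroup.rightRel_apply] at h ⊢
    have e : y * a⁻¹ * (x * a⁻¹)⁻¹ = y * x⁻¹ := by group
    rw [e]; exact h)
  left_inv := by
    intro q; refine Quotient.inductionOn' q ?_
    intro x; simp [Quotient.map'_mk'']
  right_inv := by
    intro q; refine Quotient.inductionOn' q ?_
    intro x; simp [Quotient.map'_mk'']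

/-- The homomorphism given by the right multiplication action of `G` on the right
cosets of `H`; its range is the permutation group `M` induced by this action. -/
def rmulHom {G : Type*} [Group G] (H : Subgroup G) :
    G →* Equiv.Perm (Quotient (QuotientGroup.rightRel H)) where
  toFun a := rmulPerm H a⁻¹
  map_one' := by
    ext q; refine Quotient.inductionOn' q ?_
    intro x; simp [rmulPerm, Quotient.map'_mk'']
  map_mul' a b := by
    ext q; refine Quotient.inductionOn' q ?_
    intro x; simp [rmulPerm, Quotient.map'_mk'', mul_assoc]


/-! Right translations show that `D → Dt → Dt²` and `D → Dt → D(tᵃ t)` are 2-arcs for every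
`a ∈ T`, where `tᵃ` is `t` conjugated by `a` in each coordinate. An element `g ∈ G` carrying the
first onto the second fixes `D`; conjugation by `g` is an automorphism of `T^k` preserving the
diagonal, so `g` acts as `Dy ↦ D(φ (y (σ i)))ᵢ` for one automorphism `φ` of `T` and a map `σ` of
the coordinates. Comparing cosets and using `t_k = 1` yields `c ∈ H = ⟨t_1, …, t_k⟩` such that
`a c` centralises `H`. Thus `T = C_T(H) H` normalises `H`, and `H ≠ 1` because `Γ` has no loops. -/

open Function

section PiSimpleGroup

variable {ι T : Type*} [Group T]

lemma IsSimpleGroup.center_eq_bot [IsSimpleGroup T] (hT : ∃ a b : T, a * b ≠ b * a) :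
    Subgroup.center T = ⊥ := by
  refine (IsSimpleGroup.eq_bot_or_eq_top_of_normal _ inferInstance).resolve_right fun htop => ?_
  obtain ⟨a, b, hab⟩ := hT
  exact hab (Subgroup.mem_center_iff.mp (htop ▸ Subgroup.mem_top b) a)

lemma MonoidHom.normal_range_comp_mulSingle [DecidableEq ι] {N : Type*} [Group N]
    (f : (ι → T) →* N) (hf : Surjective f) (j : ι) :
    (f.comp (MonoidHom.mulSingle (fun _ => T) j)).range.Normal := by
  refine ⟨?_⟩
  rintro _ ⟨x, rfl⟩ s
  obtain ⟨y, rfl⟩ := hf s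
  refine ⟨y j * x * (y j)⁻¹, ?_⟩
  simp only [MonoidHom.comp_apply, MonoidHom.mulSingle_apply, ← map_mul, ← map_inv,
    Pi.mulSingle_mul, Pi.mulSingle_inv]
  congr 1
  ext i
  rcases eq_or_ne i j with rfl | hij <;> simp [*]

lemma exists_eq_comp_eval_of_surjective [Finite ι] [IsSimpleGroup T]
    (hZ : Subgroup.center T = ⊥) (f : (ι → T) →* T) (hf : Surjective f) :
    ∃ (j : ι) (φ : T →* T), Surjective φ ∧ ∀ x, f x = φ (x j) := by
  classical
  let ψ : ι → T →* T := fun j => f.comp (MonoidHom.mulSingle (fun _ => T) j)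
  obtain ⟨j, hj⟩ : ∃ j, Surjective (ψ j) := by
    by_contra! hnone
    have hψ : ∀ i y, ψ i y = 1 := fun i y => by
      have hbot := (f.normal_range_comp_mulSingle hf i).eq_bot_or_eq_top.resolve_right
        (fun h => hnone i (MonoidHom.range_eq_top.mp h))
      exact DFunLike.congr_fun (MonoidHom.range_eq_bot_iff.mp hbot) y
    obtain ⟨a, ha⟩ := exists_ne (1 : T)
    obtain ⟨x, rfl⟩ := hf a
    exact ha (Subgroup.pi_mem_of_mulSingle_mem (H := f.ker) x fun i => hψ i (x i))
  refine ⟨j, ψ j, hj, fun x => ?_⟩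
  change x ∈ f.eqLocus ((ψ j).comp (Pi.evalMonoidHom _ j))
  refine Subgroup.pi_mem_of_mulSingle_mem x fun i => ?_
  rcases eq_or_ne i j with rfl | hij
  · change f _ = ψ i _
    simp [ψ]
  -- the other factors commute with the image `T` of the `j`-th one
  have hcentral : f (Pi.mulSingle i (x i)) ∈ Subgroup.center T := by
    refine Subgroup.mem_center_iff.mpr fun s => ?_
    obtain ⟨r, rfl⟩ := hj s
    exact ((Pi.mulSingle_commute hij.symm r (x i)).map f).eq
  rw [hZ, Subgroup.mem_bot] at hcentral
  change f _ = ψ j _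
  simp [hcentral, Pi.mulSingle_eq_of_ne hij.symm]

lemma mem_diagSubgroup_iff {x : ι → T} : x ∈ diagSubgroup ι T ↔ ∃ s : T, x = fun _ => s :=
  Iff.rfl

lemma exists_mulEquiv_apply_eq_of_map_diagSubgroup [Finite ι] [Nonempty ι] [IsSimpleGroup T]
    (hZ : Subgroup.center T = ⊥) (θ : (ι → T) ≃* (ι → T))
    (hθ : ∀ x ∈ diagSubgroup ι T, θ x ∈ diagSubgroup ι T) :
    ∃ (φ : T ≃* T) (σ : ι → ι), ∀ x i, θ x i = φ (x (σ i)) := by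
  have hcoord : ∀ i, ∃ (j : ι) (φ : T →* T), Surjective φ ∧ ∀ x, θ x i = φ (x j) := fun i =>
    exists_eq_comp_eval_of_surjective hZ ((Pi.evalMonoidHom _ i).comp θ.toMonoidHom)
      ((surjective_eval i).comp θ.surjective)
  choose σ φ hsurj hφ using hcoord
  obtain ⟨i₀⟩ := ‹Nonempty ι›
  have hφ_eq : ∀ i a, φ i a = φ i₀ a := fun i a => by
    obtain ⟨s, hs⟩ := hθ (fun _ => a) ⟨a, rfl⟩
    calc φ i a = θ (fun _ => a) i := (hφ i fun _ => a).symm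
      _ = θ (fun _ => a) i₀ := by rw [hs]
      _ = φ i₀ a := hφ i₀ fun _ => a
  have hinj : Injective (φ i₀) := (injective_iff_map_eq_one _).mpr fun a ha => by
    have h1 : θ (fun _ => a) = 1 := funext fun i => by rw [hφ i, hφ_eq, ha]; rfl
    exact congr_fun (θ.map_eq_one_iff.mp h1) i₀
  exact ⟨MulEquiv.ofBijective (φ i₀) ⟨hinj, hsurj i₀⟩, σ, fun x i => by rw [hφ i, hφ_eq]; rfl⟩

end PiSimpleGroup

section Generation

variable {ι T : Type*} [Group T] {t : ι → T} {j₀ : ι} {c : T}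

lemma mem_closure_range_of_eq_mul_map [Finite T] {φ : T →* T} (hφ : Injective φ)
    {σ : ι → ι} (ht : t j₀ = 1) (hc : ∀ i, t i = c * φ (t (σ i))) :
    c ∈ Subgroup.closure (Set.range t) := by
  set K := Subgroup.closure (Set.range t)
  have hφt : ∀ i, φ (t (σ i)) ∈ K.map φ := fun i =>
    Subgroup.mem_map_of_mem φ (Subgroup.subset_closure ⟨σ i, rfl⟩)
  have hcK : c ∈ K.map φ := by
    have h := hc j₀
    rw [ht, eq_comm, mul_eq_one_iff_eq_inv] at h
    simpa [h] using hφt j₀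
  have hle : K ≤ K.map φ := (Subgroup.closure_le _).mpr <| by
    rintro _ ⟨i, rfl⟩
    rw [hc i]
    exact mul_mem hcK (hφt i)
  rwa [Subgroup.eq_of_le_of_card_ge hle (Subgroup.card_map_of_injective hφ).le]

lemma mul_mem_centralizer_of_eq_mul {u : ι → T} {a c' : T} (ht : t j₀ = 1)
    (hc : ∀ i, t i = c * u i) (hc' : ∀ i, a⁻¹ * t i * a * t i = c' * (u i * u i)) :
    a * c ∈ Subgroup.centralizer (Set.range t) := by
  have hu : ∀ i, u i = c⁻¹ * t i := fun i => by rw [hc i, inv_mul_cancel_left]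
  have hc'c : c' = c * c := by
    have h := hc' j₀
    simp only [hu, ht, mul_one, inv_mul_cancel, ← mul_assoc] at h
    rwa [eq_comm, mul_inv_eq_one, mul_inv_eq_iff_eq_mul] at h
  have hconj : ∀ i, a⁻¹ * t i * a = c * t i * c⁻¹ := fun i => mul_right_cancel <|
    calc a⁻¹ * t i * a * t i = c * c * (c⁻¹ * t i * (c⁻¹ * t i)) := by rw [hc' i, hc'c, hu]
      _ = c * t i * c⁻¹ * t i := by group
  rw [Subgroup.mem_centralizer_iff]
  rintro _ ⟨i, rfl⟩
  calc t i * (a * c) = a * (a⁻¹ * t i * a) * c := by group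
    _ = a * c * t i := by rw [hconj]; group

lemma Subgroup.normal_of_forall_exists_mul_mem_centralizer {K : Subgroup T}
    (h : ∀ a, ∃ c ∈ K, a * c ∈ Subgroup.centralizer (K : Set T)) : K.Normal := by
  refine Subgroup.normalizer_eq_top_iff.mp (eq_top_iff.mpr fun a _ => ?_)
  obtain ⟨c, hc, hac⟩ := h a
  simpa using mul_mem (Subgroup.centralizer_le_normalizer _ hac)
    (inv_mem (Subgroup.le_normalizer hc))

end Generation

lemma ArcTrans.exists_map_two_arc {V : Type*} {r : V → V → Prop} {G : Subgroup (Equiv.Perm V)}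
    (h : ArcTrans r G 2) {u₀ u₁ u₂ w₀ w₁ w₂ : V} (hu₀ : r u₀ u₁) (hu₁ : r u₁ u₂)
    (hw₀ : r w₀ w₁) (hw₁ : r w₁ w₂) : ∃ g ∈ G, g u₀ = w₀ ∧ g u₁ = w₁ ∧ g u₂ = w₂ := by
  obtain ⟨g, hg, hgw⟩ := h (fun n => [u₀, u₁, u₂].getD n u₀) (fun n => [w₀, w₁, w₂].getD n w₀)
    (fun i hi => by interval_cases i <;> assumption)
    (fun i hi => by interval_cases i <;> assumption)
  exact ⟨g, hg, hgw 0 (by norm_num), hgw 1 (by norm_num), hgw 2 le_rfl⟩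

section RightCosetAction

variable {P : Type*} [Group P] (H : Subgroup P)

lemma rmulHom_mk (a x : P) :
    rmulHom H a (Quotient.mk (QuotientGroup.rightRel H) x) =
      Quotient.mk (QuotientGroup.rightRel H) (x * a⁻¹) := rfl

lemma mk_eq_mk_iff {x y : P} :
    Quotient.mk (QuotientGroup.rightRel H) x = Quotient.mk (QuotientGroup.rightRel H) y ↔
      y * x⁻¹ ∈ H :=
  Quotient.eq.trans QuotientGroup.rightRel_apply

lemma rmulHom_mk_one_eq_iff (a : P) :
    rmulHom H a (Quotient.mk (QuotientGroup.rightRel H) 1) =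
      Quotient.mk (QuotientGroup.rightRel H) 1 ↔ a ∈ H := by
  rw [rmulHom_mk, mk_eq_mk_iff]
  simp

lemma exists_mulEquiv_of_mem_normalizer (hπ : Injective (rmulHom H))
    {g : Equiv.Perm (Quotient (QuotientGroup.rightRel H))}
    (hg : g ∈ Subgroup.normalizer (rmulHom H).range)
    (hg₁ : g (Quotient.mk (QuotientGroup.rightRel H) 1) =
      Quotient.mk (QuotientGroup.rightRel H) 1) :
    ∃ θ : P ≃* P, (∀ x ∈ H, θ x ∈ H) ∧
      ∀ y, g (Quotient.mk (QuotientGroup.rightRel H) y) =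
        Quotient.mk (QuotientGroup.rightRel H) (θ y) := by
  let e := MonoidHom.ofInjective hπ
  let θ : P ≃* P := (e.trans ((rmulHom H).range.normalizerMonoidHom ⟨g, hg⟩)).trans e.symm
  have hθ : ∀ x, rmulHom H (θ x) = g * rmulHom H x * g⁻¹ := fun x => by
    rw [← MonoidHom.ofInjective_apply hπ]
    simp [θ, e]
    rfl
  have hg₁' : g⁻¹ (Quotient.mk (QuotientGroup.rightRel H) 1) =
      Quotient.mk (QuotientGroup.rightRel H) 1 := by
    rw [Equiv.Perm.inv_eq_iff_eq, hg₁]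
  refine ⟨θ, fun x hx => ?_, fun y => ?_⟩
  · rw [← rmulHom_mk_one_eq_iff] at hx ⊢
    simp [hθ, Equiv.Perm.mul_apply, hg₁', hx, hg₁]
  · have hmk : ∀ z : P, Quotient.mk (QuotientGroup.rightRel H) z =
        rmulHom H z⁻¹ (Quotient.mk (QuotientGroup.rightRel H) 1) := fun z => by
      rw [rmulHom_mk, one_mul, inv_inv]
    rw [hmk y, hmk (θ y), ← map_inv, hθ]
    simp [Equiv.Perm.mul_apply, hg₁']

lemma arc_mk_mul {G : Subgroup (Equiv.Perm (Quotient (QuotientGroup.rightRel H)))}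
    (hMG : (rmulHom H).range ≤ G)
    {arc : Quotient (QuotientGroup.rightRel H) → Quotient (QuotientGroup.rightRel H) → Prop}
    (hGaut : ∀ g ∈ G, ∀ A B, arc A B ↔ arc (g A) (g B)) {x y : P} (a : P)
    (h : arc (Quotient.mk (QuotientGroup.rightRel H) x)
      (Quotient.mk (QuotientGroup.rightRel H) y)) :
    arc (Quotient.mk (QuotientGroup.rightRel H) (x * a))
      (Quotient.mk (QuotientGroup.rightRel H) (y * a)) := by
  have h' := (hGaut _ (hMG ⟨a⁻¹, rfl⟩) _ _).mp h
  rwa [rmulHom_mk, rmulHom_mk, inv_inv] at h'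

end RightCosetAction

section DiagonalCosets

variable {ι T : Type*} [Group T]

lemma mk_eq_mk_iff_exists_mul {x y : ι → T} :
    Quotient.mk (QuotientGroup.rightRel (diagSubgroup ι T)) x =
        Quotient.mk (QuotientGroup.rightRel (diagSubgroup ι T)) y ↔
      ∃ c : T, ∀ i, y i = c * x i := by
  rw [mk_eq_mk_iff, mem_diagSubgroup_iff]
  refine exists_congr fun c => ⟨fun h i => ?_, fun h => funext fun i => ?_⟩
  · simpa [mul_inv_eq_iff_eq_mul] using congr_fun h i
  · simp [h i]

lemma rmulHom_diagSubgroup_injective [Nontrivial ι] (hZ : Subgroup.center T = ⊥) :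
    Injective (rmulHom (diagSubgroup ι T)) := by
  classical
  refine (injective_iff_map_eq_one _).mpr fun a ha => ?_
  have hconj : ∀ y : ι → T, ∃ s : T, y * a * y⁻¹ = fun _ => s := fun y => by
    have h := congr_arg (· (Quotient.mk (QuotientGroup.rightRel (diagSubgroup ι T)) y)) ha
    simp only [rmulHom_mk, Equiv.Perm.one_apply, mk_eq_mk_iff] at h
    simpa [mul_assoc, mem_diagSubgroup_iff] using h
  obtain ⟨s, rfl⟩ : ∃ s : T, a = fun _ => s := by simpa using hconj 1
  obtain ⟨i, j, hij⟩ := exists_pair_ne ι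
  suffices s ∈ Subgroup.center T by
    rw [hZ, Subgroup.mem_bot] at this
    exact funext fun _ => this
  refine Subgroup.mem_center_iff.mpr fun b => ?_
  obtain ⟨u, hu⟩ := hconj (Pi.mulSingle i b)
  have hi := congr_fun hu i
  have hj := congr_fun hu j
  simp only [Pi.mul_apply, Pi.inv_apply, Pi.mulSingle_eq_same, Pi.mulSingle_eq_of_ne' hij,
    one_mul, inv_one, mul_one] at hi hj
  rw [← hj, mul_inv_eq_iff_eq_mul] at hi
  exact hi

lemma exists_apply_mk_eq_of_mem_normalizer [Finite ι] [Nontrivial ι] [IsSimpleGroup T]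
    (hZ : Subgroup.center T = ⊥)
    {g : Equiv.Perm (Quotient (QuotientGroup.rightRel (diagSubgroup ι T)))}
    (hg : g ∈ Subgroup.normalizer (rmulHom (diagSubgroup ι T)).range)
    (hg₁ : g (Quotient.mk (QuotientGroup.rightRel (diagSubgroup ι T)) 1) =
      Quotient.mk (QuotientGroup.rightRel (diagSubgroup ι T)) 1) :
    ∃ (φ : T ≃* T) (σ : ι → ι), ∀ y,
      g (Quotient.mk (QuotientGroup.rightRel (diagSubgroup ι T)) y) =
        Quotient.mk (QuotientGroup.rightRel (diagSubgroup ι T)) fun i => φ (y (σ i)) := by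
  obtain ⟨θ, hθD, hθ⟩ :=
    exists_mulEquiv_of_mem_normalizer _ (rmulHom_diagSubgroup_injective hZ) hg hg₁
  obtain ⟨φ, σ, hφ⟩ := exists_mulEquiv_apply_eq_of_map_diagSubgroup hZ θ hθD
  exact ⟨φ, σ, fun y => by rw [hθ, funext (hφ y)]⟩

end DiagonalCosets

lemma exists_mem_closure_mul_mem_centralizer {ι T : Type*} [Group T] [Finite T] [Finite ι]
    [Nontrivial ι] [IsSimpleGroup T] (hZ : Subgroup.center T = ⊥)
    (G : Subgroup (Equiv.Perm (Quotient (QuotientGroup.rightRel (diagSubgroup ι T)))))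
    (hMG : (rmulHom (diagSubgroup ι T)).range ≤ G)
    (hGN : G ≤ Subgroup.normalizer (rmulHom (diagSubgroup ι T)).range)
    (arc : Quotient (QuotientGroup.rightRel (diagSubgroup ι T)) →
      Quotient (QuotientGroup.rightRel (diagSubgroup ι T)) → Prop)
    (hGaut : ∀ g ∈ G, ∀ A B, arc A B ↔ arc (g A) (g B)) (hG2 : ArcTrans arc G 2)
    {t : ι → T} {j₀ : ι} (ht : t j₀ = 1)
    (hw : arc (Quotient.mk (QuotientGroup.rightRel (diagSubgroup ι T)) 1)
      (Quotient.mk (QuotientGroup.rightRel (diagSubgroup ι T)) t)) (a : T) :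
    ∃ c ∈ Subgroup.closure (Set.range t), a * c ∈ Subgroup.centralizer (Set.range t) := by
  have h₁ : arc _ _ := one_mul t ▸ arc_mk_mul _ hMG hGaut t hw
  have h₂ : arc (Quotient.mk _ 1) (Quotient.mk _ fun i => a⁻¹ * t i * a) := by
    have h := arc_mk_mul _ hMG hGaut (fun _ => a) hw
    rwa [(mk_eq_mk_iff_exists_mul (x := 1 * fun _ => a) (y := 1)).mpr ⟨a⁻¹, by simp⟩,
      (mk_eq_mk_iff_exists_mul (x := t * fun _ => a) (y := fun i => a⁻¹ * t i * a)).mpr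
        ⟨a⁻¹, by simp [mul_assoc]⟩] at h
  have h₃ : arc _ _ := one_mul t ▸ arc_mk_mul _ hMG hGaut t h₂
  obtain ⟨g, hgG, hg₀, hg₁, hg₂⟩ := hG2.exists_map_two_arc hw h₁ hw h₃
  obtain ⟨φ, σ, hgφ⟩ := exists_apply_mk_eq_of_mem_normalizer hZ (hGN hgG) hg₀
  rw [hgφ, mk_eq_mk_iff_exists_mul] at hg₁ hg₂
  obtain ⟨c, hc⟩ := hg₁
  obtain ⟨c', hc'⟩ := hg₂
  refine ⟨c, mem_closure_range_of_eq_mul_map (φ := φ.toMonoidHom) φ.injective ht hc,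
    mul_mem_centralizer_of_eq_mul (c' := c') ht hc fun i => ?_⟩
  simpa using hc' i

/-- **Lemma 3.6.** In the setting of Theorem 3 — `T` a finite nonabelian
simple group, `k ≥ 2`, `D` the diagonal subgroup of `T^k`, `M ≤ G ≤ N_{Sym(V)}(M)`, and
`Γ` a connected `(G,2)`-arc-transitive digraph on the right cosets `V` of `D` — if
`w = D(t_1,…,t_k)` is an out-neighbour of `v = D` with representative chosen so that
`t_k = 1`, then `⟨t_1,…,t_k⟩ = T`. -/
theorem stmt19 {T : Type*} [Group T] [Finite T]
    (hTsimple : IsSimpleGroup T) (hTnonab : ∃ a b : T, a * b ≠ b * a)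
    (k : ℕ) (hk : 2 ≤ k)
    (G : Subgroup (Equiv.Perm (Quotient (QuotientGroup.rightRel (diagSubgroup (Fin k) T)))))
    (hMG : (rmulHom (diagSubgroup (Fin k) T)).range ≤ G)
    (hGN : G ≤ Subgroup.normalizer (rmulHom (diagSubgroup (Fin k) T)).range)
    (arc : Quotient (QuotientGroup.rightRel (diagSubgroup (Fin k) T)) →
      Quotient (QuotientGroup.rightRel (diagSubgroup (Fin k) T)) → Prop)
    (hirr : ∀ A, ¬ arc A A)
    (hGaut : ∀ g ∈ G, ∀ A B, arc A B ↔ arc (g A) (g B))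
    (hG2 : ArcTrans arc G 2)
    (t : Fin k → T) (htk : t ⟨k - 1, by omega⟩ = 1)
    (hw : arc (Quotient.mk (QuotientGroup.rightRel (diagSubgroup (Fin k) T)) 1)
      (Quotient.mk (QuotientGroup.rightRel (diagSubgroup (Fin k) T)) t)) :
    Subgroup.closure (Set.range t) = (⊤ : Subgroup T) := by
  have := hTsimple
  have : Nontrivial (Fin k) := Fin.nontrivial_iff_two_le.mpr hk
  have hnormal : (Subgroup.closure (Set.range t)).Normal :=
    Subgroup.normal_of_forall_exists_mul_mem_centralizer fun a => by
      simpa only [Subgroup.centralizer_closure] using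
        exists_mem_closure_mul_mem_centralizer (IsSimpleGroup.center_eq_bot hTnonab)
          G hMG hGN arc hGaut hG2 htk hw a
  refine hnormal.eq_bot_or_eq_top.resolve_left fun hbot => hirr (Quotient.mk _ 1) ?_
  have ht : t = 1 := funext fun i => Subgroup.closure_eq_bot_iff.mp hbot ⟨i, rfl⟩
  rwa [ht] at hw
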